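/- (Characterization of Hecke eigenforms, Corollary 5.5) Suppose Γ ≤ GL₂(A) contains Γ(𝔫) for some nonzero ideal 𝔫 ⊆ A. Let η ∈ GL₂(F), let γ₁,…,γ_r be a system of representatives of Γ\ΓηΓ, and let f : Ω → L be quasi-modular of weight k, type m and depth ≤ ℓ for Γ with coefficient family (f₀,…,f_ℓ). Let λ ∈ L. With T_η(f) := (det η)^{k−m} Σ_j f ∥_{k,m} γ_j and T_η(f_i) := (det η)^{(k−2i)−(m−i)} Σ_j f_i ∥_{k−2i,m−i} γ_j (where f_i carries the coefficient family ((h+i choose i)·f_{h+i})_h), the following are equivalent: (1) T_η(f) = λ·f; (2) T_η(f_i) = λ·(det η)^{−i}·f_i for every 0 ≤ i ≤ ℓ. -/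

import Mathlib

noncomputable section

namespace DrinfeldQM

variable {L : Type*} [Field L]

/-- Entry `(i,j)` of `γ ∈ GL₂(F)`, viewed inside `L`. -/
def Mc (F : Subfield L) (γ : GL (Fin 2) F) (i j : Fin 2) : L :=
  ((γ : Matrix (Fin 2) (Fin 2) F) i j : L)

/-- Determinant of `γ ∈ GL₂(F)`, viewed inside `L`. -/
def detL (F : Subfield L) (γ : GL (Fin 2) F) : L :=
  ((γ : Matrix (Fin 2) (Fin 2) F).det : L)

/-- Automorphy factor `cz + d`. -/
def jf (F : Subfield L) (γ : GL (Fin 2) F) (z : L) : L :=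
  Mc F γ 1 0 * z + Mc F γ 1 1

/-- Fractional linear action of `GL₂(F)` on `L` (restricting to `Ω`). -/
def act (F : Subfield L) (γ : GL (Fin 2) F) (z : L) : L :=
  (Mc F γ 0 0 * z + Mc F γ 0 1) / jf F γ z

/-- The Drinfeld upper half plane `Ω = L ∖ F`. -/
def Omega (F : Subfield L) : Set L := {z | z ∉ F}

/-- The slash operator `f |_{k,m} γ` of weight `k` and type `m`. -/
def slash (F : Subfield L) (k m : ℤ) (f : L → L) (γ : GL (Fin 2) F) : L → L :=
  fun z => detL F γ ^ m * jf F γ z ^ (-k) * f (act F γ z)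

/-- `f` is quasi-modular of weight `k`, type `m` and depth `≤ ℓ` for the set `S ⊆ GL₂(F)`
with coefficient family `fam` (only the indices `0,…,ℓ` of `fam` are relevant). -/
def IsQM (F : Subfield L) (S : Set (GL (Fin 2) F)) (k m : ℤ) (ℓ : ℕ)
    (f : L → L) (fam : ℕ → L → L) : Prop :=
  Set.EqOn (fam 0) f (Omega F) ∧
    ∀ γ ∈ S, ∀ z ∈ Omega F,
      slash F k m f γ z =
        ∑ i ∈ Finset.range (ℓ + 1), fam i z * (Mc F γ 1 0 / jf F γ z) ^ i

/-- The coefficient family of the `i`-th coefficient `f_i` of a quasi-modular function with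
coefficient family `fam`:  `(f_i)_h = ((h+i) choose i) · f_{h+i}`. -/
def shiftFam (i : ℕ) (fam : ℕ → L → L) : ℕ → L → L :=
  fun h z => ((h + i).choose i : L) * fam (h + i) z

/-- The double-slash operator `f ∥_{k,m} γ` of a quasi-modular function of depth `≤ ℓ` with
coefficient family `fam`. -/
def dslash (F : Subfield L) (k m : ℤ) (ℓ : ℕ) (fam : ℕ → L → L)
    (γ : GL (Fin 2) F) : L → L :=
  fun z => ∑ i ∈ Finset.range (ℓ + 1),
    (-(Mc F γ 1 0) / jf F γ z) ^ i * detL F γ ^ (m - (i : ℤ)) *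
      jf F γ z ^ (2 * (i : ℤ) - k) * fam i (act F γ z)

/-- The double-slash operator on polynomial-valued functions `P : Ω → L[X]`:
`(P ∥_{k,m} γ)(z, X) = (det γ)^m (cz+d)^{-k} P(γ·z, ((cz+d)²/det γ)(X - c/(cz+d)))`. -/
def pdslash (F : Subfield L) (k m : ℤ) (P : L → Polynomial L)
    (γ : GL (Fin 2) F) : L → Polynomial L :=
  fun z =>
    Polynomial.C (detL F γ ^ m * jf F γ z ^ (-k)) *
      (P (act F γ z)).comp
        (Polynomial.C (jf F γ z ^ 2 / detL F γ) *
          (Polynomial.X - Polynomial.C (Mc F γ 1 0 / jf F γ z)))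

/-- The associated polynomial `P_f(z, X) = ∑_{i=0}^{ℓ} f_i(z) Xⁱ`. -/
def assocPoly (ℓ : ℕ) (fam : ℕ → L → L) : L → Polynomial L :=
  fun z => ∑ i ∈ Finset.range (ℓ + 1), Polynomial.C (fam i z) * Polynomial.X ^ i

/-- `E` satisfies the functional equation of the false Eisenstein series (weight 2, type 1,
depth 1, coefficient family `(E, -π⁻¹)`) for all `γ ∈ S`. -/
def EFunEq (F : Subfield L) (S : Set (GL (Fin 2) F)) (π : L) (E : L → L) : Prop :=
  ∀ γ ∈ S, ∀ z ∈ Omega F,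
    E (act F γ z) =
      (detL F γ)⁻¹ * jf F γ z ^ 2 * (E z - Mc F γ 1 0 / (π * jf F γ z))

variable {Fq : Type*} [Field Fq] [Fintype Fq]

/-- The image in `L` of a polynomial `r ∈ A = Fq[T]` under `A → F ⊆ L`. -/
def iL (F : Subfield L) (ι : Polynomial Fq →+* F) (r : Polynomial Fq) : L := (ι r : L)

/-- `γ ∈ GL₂(F)` lies in `Γ₀(𝔞) ⊆ GL₂(A)`: its entries come from a matrix `M` over
`A = Fq[T]` with unit determinant whose lower-left entry lies in `𝔞`.
Taking `𝔞 = ⊤` expresses membership in `GL₂(A)`. -/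
def InGamma0 (F : Subfield L) (ι : Polynomial Fq →+* F)
    (𝔞 : Ideal (Polynomial Fq)) (γ : GL (Fin 2) F) : Prop :=
  ∃ M : Matrix (Fin 2) (Fin 2) (Polynomial Fq),
    (∀ i j, iL F ι (M i j) = Mc F γ i j) ∧ IsUnit M.det ∧ M 1 0 ∈ 𝔞

/-- `γ ∈ GL₂(F)` lies in the principal congruence subgroup `Γ(𝔫) ⊆ GL₂(A)`. -/
def InGammaN (F : Subfield L) (ι : Polynomial Fq →+* F)
    (𝔫 : Ideal (Polynomial Fq)) (γ : GL (Fin 2) F) : Prop :=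
  ∃ M : Matrix (Fin 2) (Fin 2) (Polynomial Fq),
    (∀ i j, iL F ι (M i j) = Mc F γ i j) ∧ IsUnit M.det ∧
      ∀ i j, M i j - (1 : Matrix (Fin 2) (Fin 2) (Polynomial Fq)) i j ∈ 𝔫

/-- `g` is modular of weight `w` and type `t` for `Γ₀(𝔞)`. -/
def IsModularOn (F : Subfield L) (ι : Polynomial Fq →+* F)
    (𝔞 : Ideal (Polynomial Fq)) (w t : ℤ) (g : L → L) : Prop :=
  ∀ γ : GL (Fin 2) F, InGamma0 F ι 𝔞 γ → ∀ z ∈ Omega F, slash F w t g γ z = g z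

/-- The degeneracy map `(δ_𝔭 g)(z) = g(℘ z)`. -/
def deltaP (F : Subfield L) (ι : Polynomial Fq →+* F) (℘ : Polynomial Fq)
    (g : L → L) : L → L := fun z => g (iL F ι ℘ * z)

/-- The Atkin–Lehner operator `(U_𝔭 g)(z) = ∑_{Q ∈ A, deg Q < deg ℘} g((z+Q)/℘)`,
where `Q = ∑ᵢ cᵢ Tⁱ` ranges over polynomials of degree `< deg ℘`. -/
def UP (F : Subfield L) (ι : Polynomial Fq →+* F) (℘ : Polynomial Fq)
    (g : L → L) : L → L :=
  fun z => ∑ c : Fin ℘.natDegree → Fq,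
    g ((z + iL F ι (∑ i : Fin ℘.natDegree, Polynomial.C (c i) * Polynomial.X ^ (i : ℕ))) /
      iL F ι ℘)

/-- The `𝔭`-stabilization `E_𝔭 = E - ℘·δ_𝔭E`. -/
def Ep (F : Subfield L) (ι : Polynomial Fq →+* F) (℘ : Polynomial Fq)
    (E : L → L) : L → L := fun z => E z - iL F ι ℘ * deltaP F ι ℘ E z

/-!
Attach to `f` the polynomial `P_f(z, X) = ∑ fᵢ(z) Xⁱ`. The coefficient of `Xⁱ` in `P_f ∥_{k,m} γ`
is `fᵢ ∥_{k-2i,m-i} γ`, so the coefficient of `Xⁱ` in `T_η P_f = (det η)^{k-m} ∑ⱼ P_f ∥ γⱼ` is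
`(det η)ⁱ T_η(fᵢ)`. Quasi-modularity makes `P_f` invariant under `∥` for `Γ`, and since right
multiplication by `Γ` permutes the cosets `Γγⱼ`, so is `T_η P_f`. Finally, an invariant polynomial
function is determined by its constant term, because `Γ ⊇ Γ(𝔫)` contains the infinitely many
unipotents `(1 0; n 1)`, `n ∈ 𝔫`, and evaluating the invariance under them at the right points kills
all higher coefficients. Hence `T_η f = λf` forces `T_η P_f = λ P_f`, which is the second
statement coefficientwise.
-/

open Polynomial

section Action

variable (F : Subfield L)

lemma Mc_mem (γ : GL (Fin 2) F) (i j : Fin 2) : Mc F γ i j ∈ F :=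
  SetLike.coe_mem _

lemma detL_eq (γ : GL (Fin 2) F) :
    detL F γ = Mc F γ 0 0 * Mc F γ 1 1 - Mc F γ 0 1 * Mc F γ 1 0 := by
  simp [detL, Mc, Matrix.det_fin_two]

lemma detL_mul (γ₁ γ₂ : GL (Fin 2) F) : detL F (γ₁ * γ₂) = detL F γ₁ * detL F γ₂ := by
  simp [detL, Matrix.det_mul]

lemma detL_ne_zero (γ : GL (Fin 2) F) : detL F γ ≠ 0 := by
  simpa [detL] using (Matrix.GeneralLinearGroup.det γ).ne_zero

lemma Mc_mul (γ₁ γ₂ : GL (Fin 2) F) (i j : Fin 2) :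
    Mc F (γ₁ * γ₂) i j = Mc F γ₁ i 0 * Mc F γ₂ 0 j + Mc F γ₁ i 1 * Mc F γ₂ 1 j := by
  simp [Mc, Matrix.mul_apply, Fin.sum_univ_two]

lemma jf_ne_zero (γ : GL (Fin 2) F) {z : L} (hz : z ∈ Omega F) : jf F γ z ≠ 0 := by
  intro h
  by_cases hc : Mc F γ 1 0 = 0
  · have hd : Mc F γ 1 1 = 0 := by simpa [jf, hc] using h
    exact detL_ne_zero F γ (by rw [detL_eq, hc, hd]; ring)
  · rw [jf] at h
    refine hz ?_
    have hz' : z = -Mc F γ 1 1 / Mc F γ 1 0 := by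
      rw [eq_div_iff hc]
      linear_combination h
    rw [hz']
    exact F.div_mem (F.neg_mem (Mc_mem F γ 1 1)) (Mc_mem F γ 1 0)

lemma act_mem_Omega (γ : GL (Fin 2) F) {z : L} (hz : z ∈ Omega F) : act F γ z ∈ Omega F := by
  intro hw
  have hnum : Mc F γ 0 0 * z + Mc F γ 0 1 = act F γ z * (Mc F γ 1 0 * z + Mc F γ 1 1) := by
    rw [← jf, act, div_mul_cancel₀ _ (jf_ne_zero F γ hz)]
  set w := act F γ z
  by_cases hac : Mc F γ 0 0 - w * Mc F γ 1 0 = 0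
  · have hbd : Mc F γ 0 1 - w * Mc F γ 1 1 = 0 := by linear_combination hnum - z * hac
    refine detL_ne_zero F γ ?_
    rw [detL_eq]
    linear_combination Mc F γ 1 1 * hac - Mc F γ 1 0 * hbd
  · refine hz ?_
    have hz' : z = (w * Mc F γ 1 1 - Mc F γ 0 1) / (Mc F γ 0 0 - w * Mc F γ 1 0) := by
      rw [eq_div_iff hac]
      linear_combination hnum
    rw [hz']
    exact F.div_mem (F.sub_mem (F.mul_mem hw (Mc_mem F γ 1 1)) (Mc_mem F γ 0 1))
      (F.sub_mem (Mc_mem F γ 0 0) (F.mul_mem hw (Mc_mem F γ 1 0)))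

lemma jf_mul (γ₁ γ₂ : GL (Fin 2) F) {z : L} (hz : z ∈ Omega F) :
    jf F (γ₁ * γ₂) z = jf F γ₁ (act F γ₂ z) * jf F γ₂ z := by
  have h₂ := jf_ne_zero F γ₂ hz
  simp only [jf, act, Mc_mul] at h₂ ⊢
  field_simp
  ring

lemma act_mul (γ₁ γ₂ : GL (Fin 2) F) {z : L} (hz : z ∈ Omega F) :
    act F (γ₁ * γ₂) z = act F γ₁ (act F γ₂ z) := by
  have h₂ := jf_ne_zero F γ₂ hz
  have h₁ := jf_ne_zero F γ₁ (act_mem_Omega F γ₂ hz)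
  rw [act, act, jf_mul F γ₁ γ₂ hz, div_eq_div_iff (mul_ne_zero h₁ h₂) h₁]
  simp only [jf, act, Mc_mul] at h₂ ⊢
  field_simp
  ring

lemma Mc_mul_mul_jf (g γ : GL (Fin 2) F) (z : L) :
    Mc F (g * γ) 1 0 * jf F γ z = Mc F γ 1 0 * jf F (g * γ) z + Mc F g 1 0 * detL F γ := by
  simp only [jf, Mc_mul, detL_eq]
  ring

/-- The cocycle relation of `c/(cz+d)`, which makes `∥` a right action. -/
lemma jf_sq_div_detL_mul_sub (g γ : GL (Fin 2) F) {z : L} (hz : z ∈ Omega F) :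
    jf F γ z ^ 2 / detL F γ *
        (Mc F (g * γ) 1 0 / jf F (g * γ) z - Mc F γ 1 0 / jf F γ z) =
      Mc F g 1 0 / jf F g (act F γ z) := by
  have hj := jf_ne_zero F γ hz
  have hj' := jf_ne_zero F g (act_mem_Omega F γ hz)
  have hd := detL_ne_zero F γ
  have key := Mc_mul_mul_jf F g γ z
  rw [jf_mul F g γ hz] at key ⊢
  field_simp
  linear_combination key

lemma slash_mul (k m : ℤ) (f : L → L) (g γ : GL (Fin 2) F) {z : L} (hz : z ∈ Omega F) :
    slash F k m f (g * γ) z = slash F k m (slash F k m f g) γ z := by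
  simp only [slash, detL_mul, jf_mul F g γ hz, act_mul F g γ hz, mul_zpow]
  ring

end Action

section LowerUnipotent

variable (F : Subfield L)

def lowerUnipotent (x : F) : GL (Fin 2) F :=
  ⟨!![1, 0; x, 1], !![1, 0; -x, 1], by simp [Matrix.one_fin_two],
    by simp [Matrix.one_fin_two]⟩

lemma injective_ratio_lowerUnipotent_mul (γ : GL (Fin 2) F) {z : L} (hz : z ∈ Omega F) :
    Function.Injective fun x : F =>
      Mc F (lowerUnipotent F x * γ) 1 0 / jf F (lowerUnipotent F x * γ) z := by
  intro x y h
  rw [div_eq_div_iff (jf_ne_zero F _ hz) (jf_ne_zero F _ hz)] at h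
  have hxy : ((x : L) - y) * detL F γ = 0 := by
    simp only [jf, Mc_mul] at h
    simp [Mc, lowerUnipotent] at h
    simp only [detL_eq, Mc]
    linear_combination h
  exact Subtype.ext (sub_eq_zero.1 ((mul_eq_zero.1 hxy).resolve_right (detL_ne_zero F γ)))

lemma eq_of_forall_eval_ratio_eq {S : Set (GL (Fin 2) F)}
    (hU : {x : F | lowerUnipotent F x ∈ S}.Infinite) (γ : GL (Fin 2) F) {z : L}
    (hz : z ∈ Omega F) {p q : L[X]}
    (h : ∀ x, lowerUnipotent F x ∈ S →
      p.eval (Mc F (lowerUnipotent F x * γ) 1 0 / jf F (lowerUnipotent F x * γ) z) =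
        q.eval (Mc F (lowerUnipotent F x * γ) 1 0 / jf F (lowerUnipotent F x * γ) z)) :
    p = q := by
  refine eq_of_infinite_eval_eq p q <|
    ((Set.infinite_image_iff (injective_ratio_lowerUnipotent_mul F γ hz).injOn).2 hU).mono ?_
  rintro _ ⟨x, hx, rfl⟩
  exact h x hx

end LowerUnipotent

section PolynomialSlash

variable (F : Subfield L) (k m : ℤ)

lemma eval_pdslash (P : L → L[X]) (γ : GL (Fin 2) F) (z x : L) :
    (pdslash F k m P γ z).eval x = detL F γ ^ m * jf F γ z ^ (-k) *
      (P (act F γ z)).eval (jf F γ z ^ 2 / detL F γ * (x - Mc F γ 1 0 / jf F γ z)) := by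
  simp [pdslash]

lemma pdslash_mul (P : L → L[X]) (γ₁ γ₂ : GL (Fin 2) F) {z : L} (hz : z ∈ Omega F) :
    pdslash F k m P (γ₁ * γ₂) z = pdslash F k m (pdslash F k m P γ₁) γ₂ z := by
  have hb : jf F (γ₁ * γ₂) z ^ 2 / detL F (γ₁ * γ₂) =
      jf F γ₁ (act F γ₂ z) ^ 2 / detL F γ₁ * (jf F γ₂ z ^ 2 / detL F γ₂) := by
    rw [detL_mul, jf_mul F γ₁ γ₂ hz]
    ring
  rw [pdslash, pdslash, pdslash, act_mul F γ₁ γ₂ hz, mul_comp, C_comp, comp_assoc, ← mul_assoc,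
    ← C_mul]
  congr 2
  · rw [detL_mul, jf_mul F γ₁ γ₂ hz, mul_zpow, mul_zpow]
    ring
  · rw [mul_comp, C_comp, sub_comp, X_comp, C_comp, ← jf_sq_div_detL_mul_sub F γ₁ γ₂ hz, hb]
    simp only [map_mul, map_sub]
    ring

lemma pdslash_congr {P Q : L → L[X]} {γ : GL (Fin 2) F} {z : L}
    (h : P (act F γ z) = Q (act F γ z)) : pdslash F k m P γ z = pdslash F k m Q γ z := by
  rw [pdslash, pdslash, h]

lemma pdslash_C_mul (a : L) (P : L → L[X]) (γ : GL (Fin 2) F) (z : L) :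
    pdslash F k m (fun w => C a * P w) γ z = C a * pdslash F k m P γ z := by
  simp only [pdslash, mul_comp, C_comp]
  ring

lemma pdslash_sum {ι : Type*} (s : Finset ι) (P : ι → L → L[X]) (γ : GL (Fin 2) F) (z : L) :
    pdslash F k m (fun w => ∑ j ∈ s, P j w) γ z = ∑ j ∈ s, pdslash F k m (P j) γ z := by
  simp only [pdslash, sum_comp, Finset.mul_sum]

end PolynomialSlash

section Invariance

variable (F : Subfield L) (Γ : Subgroup (GL (Fin 2) F)) (k m : ℤ)

def IsPSlashInvariant (P : L → L[X]) : Prop :=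
  ∀ γ ∈ Γ, ∀ z ∈ Omega F, pdslash F k m P γ z = P z

variable {F Γ k m}

lemma IsPSlashInvariant.C_mul {P : L → L[X]} (hP : IsPSlashInvariant F Γ k m P) (a : L) :
    IsPSlashInvariant F Γ k m fun z => C a * P z := fun γ hγ z hz => by
  rw [pdslash_C_mul, hP γ hγ z hz]

/-- For a lower unipotent `u ∈ Γ`, the substitution defining `∥ u` sends `X = c/(cz+d)` to `0`,
so invariance under `u` expresses the value there through the constant term. -/
lemma IsPSlashInvariant.eq_of_coeff_zero_eq
    (hU : {x : F | lowerUnipotent F x ∈ Γ}.Infinite) {P Q : L → L[X]}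
    (hP : IsPSlashInvariant F Γ k m P) (hQ : IsPSlashInvariant F Γ k m Q)
    (h₀ : ∀ w ∈ Omega F, (P w).coeff 0 = (Q w).coeff 0) {z : L} (hz : z ∈ Omega F) :
    P z = Q z := by
  refine eq_of_forall_eval_ratio_eq F hU 1 hz fun x hx => ?_
  have key : ∀ R : L → L[X], IsPSlashInvariant F Γ k m R →
      (R z).eval (Mc F (lowerUnipotent F x * 1) 1 0 / jf F (lowerUnipotent F x * 1) z) =
        detL F (lowerUnipotent F x) ^ m * jf F (lowerUnipotent F x) z ^ (-k) *
          (R (act F (lowerUnipotent F x) z)).coeff 0 := by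
    intro R hR
    rw [mul_one, ← hR _ hx z hz, eval_pdslash, sub_self, mul_zero, coeff_zero_eq_eval_zero]
  rw [key P hP, key Q hQ, h₀ _ (act_mem_Omega F _ hz)]

end Invariance

section AssocPoly

variable {F : Subfield L} {k m : ℤ} {ℓ : ℕ} {fam : ℕ → L → L}

lemma eval_assocPoly (z x : L) :
    (assocPoly ℓ fam z).eval x = ∑ i ∈ Finset.range (ℓ + 1), fam i z * x ^ i := by
  simp [assocPoly, eval_finsetSum]

lemma coeff_assocPoly (z : L) {i : ℕ} (hi : i ≤ ℓ) : (assocPoly ℓ fam z).coeff i = fam i z := by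
  simp [assocPoly, finsetSum_coeff, Nat.lt_succ_iff.2 hi]

lemma IsQM.eval_assocPoly_ratio {S : Set (GL (Fin 2) F)} {f : L → L}
    (hQM : IsQM F S k m ℓ f fam) {g : GL (Fin 2) F} (hg : g ∈ S) {z : L} (hz : z ∈ Omega F) :
    (assocPoly ℓ fam z).eval (Mc F g 1 0 / jf F g z) = slash F k m f g z := by
  rw [eval_assocPoly, hQM.2 g hg z hz]

lemma IsQM.isPSlashInvariant_assocPoly {Γ : Subgroup (GL (Fin 2) F)} {f : L → L}
    (hU : {x : F | lowerUnipotent F x ∈ Γ}.Infinite) (hQM : IsQM F Γ k m ℓ f fam) :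
    IsPSlashInvariant F Γ k m (assocPoly ℓ fam) := by
  intro γ hγ z hz
  refine eq_of_forall_eval_ratio_eq F hU γ hz fun x hx => ?_
  rw [eval_pdslash, jf_sq_div_detL_mul_sub F _ γ hz,
    hQM.eval_assocPoly_ratio hx (act_mem_Omega F γ hz),
    hQM.eval_assocPoly_ratio (Γ.mul_mem hx hγ) hz, slash_mul F k m f _ γ hz]
  rfl

end AssocPoly

section Hecke

variable (F : Subfield L) (k m : ℤ)

lemma shiftFam_zero (fam : ℕ → L → L) : shiftFam 0 fam = fam := by
  ext h z
  simp [shiftFam]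

lemma coeff_pdslash_assocPoly (ℓ : ℕ) (fam : ℕ → L → L) (γ : GL (Fin 2) F) {z : L}
    (hz : z ∈ Omega F) {i : ℕ} (hi : i ≤ ℓ) :
    (pdslash F k m (assocPoly ℓ fam) γ z).coeff i =
      dslash F (k - 2 * (i : ℤ)) (m - (i : ℤ)) (ℓ - i) (shiftFam i fam) γ z := by
  have hJ := jf_ne_zero F γ hz
  have hD := detL_ne_zero F γ
  rw [pdslash, assocPoly, sub_eq_add_neg, ← C_neg, coeff_C_mul, sum_comp]
  simp only [mul_comp, C_comp, pow_comp, X_comp, mul_pow, ← C_pow, finsetSum_coeff,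
    coeff_C_mul, coeff_X_add_C_pow]
  rw [Finset.mul_sum, dslash, show ℓ - i + 1 = ℓ + 1 - i by omega, Finset.range_eq_Ico,
    ← Finset.sum_Ico_consecutive _ (Nat.zero_le i) (by omega : i ≤ ℓ + 1),
    Finset.sum_eq_zero fun t ht => by
      rw [Nat.choose_eq_zero_of_lt (Finset.mem_Ico.1 ht).2, Nat.cast_zero]; ring,
    zero_add, Finset.sum_Ico_eq_sum_range]
  refine Finset.sum_congr rfl fun h _ => ?_
  rw [shiftFam, add_comm i h, Nat.add_sub_cancel,
    show m - (i : ℤ) - (h : ℤ) = m - ((h + i : ℕ) : ℤ) by push_cast; ring,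
    show 2 * (h : ℤ) - (k - 2 * (i : ℤ)) = -k + ((2 * (h + i) : ℕ) : ℤ) by push_cast; ring,
    zpow_sub₀ hD, zpow_add₀ hJ, zpow_natCast, zpow_natCast, div_pow, neg_div, pow_mul]
  field_simp

lemma exists_perm_mul_eq_mul {G : Type*} [Group G] {Γ : Subgroup G} {η : G} {ι : Type*}
    [Finite ι] {γs : ι → G}
    (hcov : ⋃ j, (fun g => g * γs j) '' (Γ : Set G) = {x | ∃ a ∈ Γ, ∃ b ∈ Γ, x = a * η * b})
    (hdisj : Pairwise fun j j' =>
      Disjoint ((fun g => g * γs j) '' (Γ : Set G)) ((fun g => g * γs j') '' (Γ : Set G)))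
    {γ : G} (hγ : γ ∈ Γ) :
    ∃ σ : Equiv.Perm ι, ∀ j, ∃ δ ∈ Γ, γs j * γ = δ * γs (σ j) := by
  have hrep : ∀ j, ∃ j', ∃ δ ∈ Γ, γs j * γ = δ * γs j' := by
    intro j
    have hj : γs j ∈ ⋃ j, (fun g => g * γs j) '' (Γ : Set G) :=
      Set.mem_iUnion.2 ⟨j, 1, Γ.one_mem, one_mul _⟩
    rw [hcov] at hj
    obtain ⟨a, ha, b, hb, hab⟩ := hj
    have hjγ : γs j * γ ∈ ⋃ j, (fun g => g * γs j) '' (Γ : Set G) := by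
      rw [hcov]
      exact ⟨a, ha, b * γ, Γ.mul_mem hb hγ, by rw [hab, mul_assoc]⟩
    obtain ⟨j', δ, hδ, h⟩ := Set.mem_iUnion.1 hjγ
    exact ⟨j', δ, hδ, h.symm⟩
  choose σ δ hδ hσ using hrep
  refine ⟨Equiv.ofBijective σ (Finite.injective_iff_bijective.1 fun j₁ j₂ h => ?_),
    fun j => ⟨δ j, hδ j, hσ j⟩⟩
  by_contra hne
  refine Set.disjoint_left.1 (hdisj hne) ⟨1, Γ.one_mem, one_mul _⟩
    ⟨δ j₁ * (δ j₂)⁻¹, Γ.mul_mem (hδ j₁) (Γ.inv_mem (hδ j₂)), mul_right_cancel (b := γ) ?_⟩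
  calc δ j₁ * (δ j₂)⁻¹ * γs j₂ * γ = δ j₁ * (δ j₂)⁻¹ * (δ j₂ * γs (σ j₂)) := by
        rw [mul_assoc _ (γs j₂), hσ j₂]
    _ = γs j₁ * γ := by rw [hσ j₁, h]; group

def pHecke (η : GL (Fin 2) F) {ι : Type*} [Fintype ι] (γs : ι → GL (Fin 2) F)
    (P : L → L[X]) : L → L[X] :=
  fun z => C (detL F η ^ (k - m)) * ∑ j, pdslash F k m P (γs j) z

variable {F k m}

lemma isPSlashInvariant_pHecke {Γ : Subgroup (GL (Fin 2) F)} {η : GL (Fin 2) F} {ι : Type*}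
    [Fintype ι] {γs : ι → GL (Fin 2) F}
    (hcov : ⋃ j, (fun g => g * γs j) '' (Γ : Set (GL (Fin 2) F)) =
      {x | ∃ a ∈ Γ, ∃ b ∈ Γ, x = a * η * b})
    (hdisj : Pairwise fun j j' => Disjoint ((fun g => g * γs j) '' (Γ : Set (GL (Fin 2) F)))
      ((fun g => g * γs j') '' (Γ : Set (GL (Fin 2) F))))
    {P : L → L[X]} (hP : IsPSlashInvariant F Γ k m P) :
    IsPSlashInvariant F Γ k m (pHecke F k m η γs P) := by
  intro γ hγ z hz
  obtain ⟨σ, hσ⟩ := exists_perm_mul_eq_mul hcov hdisj hγ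
  have hterm : ∀ j, pdslash F k m (pdslash F k m P (γs j)) γ z =
      pdslash F k m P (γs (σ j)) z := by
    intro j
    obtain ⟨δ, hδ, h⟩ := hσ j
    rw [← pdslash_mul F k m P _ _ hz, h, pdslash_mul F k m P _ _ hz]
    exact pdslash_congr F k m (hP δ hδ _ (act_mem_Omega F _ hz))
  unfold pHecke
  rw [pdslash_C_mul, pdslash_sum, Fintype.sum_congr _ _ hterm,
    Equiv.sum_comp σ fun j => pdslash F k m P (γs j) z]

lemma coeff_pHecke_assocPoly (η : GL (Fin 2) F) {ι : Type*} [Fintype ι]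
    (γs : ι → GL (Fin 2) F) (ℓ : ℕ) (fam : ℕ → L → L) {z : L} (hz : z ∈ Omega F) {i : ℕ}
    (hi : i ≤ ℓ) :
    (pHecke F k m η γs (assocPoly ℓ fam) z).coeff i = detL F η ^ (i : ℤ) *
      (detL F η ^ ((k - 2 * (i : ℤ)) - (m - (i : ℤ))) *
        ∑ j, dslash F (k - 2 * (i : ℤ)) (m - (i : ℤ)) (ℓ - i) (shiftFam i fam) (γs j) z) := by
  rw [pHecke, coeff_C_mul, finsetSum_coeff, ← mul_assoc, ← zpow_add₀ (detL_ne_zero F η)]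
  simp only [coeff_pdslash_assocPoly F k m ℓ fam _ hz hi]
  ring_nf

end Hecke

section Congruence

variable (F : Subfield L)

lemma inGammaN_lowerUnipotent {Fq : Type*} [Field Fq] (ι : Polynomial Fq →+* F)
    {𝔫 : Ideal (Polynomial Fq)} {n : Polynomial Fq} (hn : n ∈ 𝔫) :
    InGammaN F ι 𝔫 (lowerUnipotent F (ι n)) := by
  refine ⟨!![1, 0; n, 1], fun i j => ?_, by simp [Matrix.det_fin_two_of], fun i j => ?_⟩ <;>
    fin_cases i <;> fin_cases j <;> simp [iL, Mc, lowerUnipotent, hn]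

lemma infinite_setOf_lowerUnipotent_mem {Fq : Type*} [Field Fq] {ι : Polynomial Fq →+* F}
    (hι : Function.Injective ι) {𝔫 : Ideal (Polynomial Fq)} (h𝔫 : 𝔫 ≠ ⊥) {Γ : Subgroup (GL (Fin 2) F)}
    (hΓ𝔫 : ∀ γ : GL (Fin 2) F, InGammaN F ι 𝔫 γ → γ ∈ Γ) :
    {x : F | lowerUnipotent F x ∈ Γ}.Infinite := by
  obtain ⟨g, hg𝔫, hg⟩ := Submodule.exists_mem_ne_zero_of_ne_bot h𝔫
  exact Set.infinite_of_injective_forall_mem (hι.comp (mul_right_injective₀ hg)) fun p =>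
    hΓ𝔫 _ (inGammaN_lowerUnipotent F ι (Ideal.mul_mem_right p 𝔫 hg𝔫))

end Congruence

theorem hecke_eigenform_iff_general
    {L : Type*} [Field L] {Fq : Type*} [Field Fq]
    (F : Subfield L) (ι : Polynomial Fq →+* F) (hι : Function.Injective ι)
    (Γ : Subgroup (GL (Fin 2) F))
    (𝔫 : Ideal (Polynomial Fq)) (h𝔫 : 𝔫 ≠ ⊥)
    (hΓ𝔫 : ∀ γ : GL (Fin 2) F, InGammaN F ι 𝔫 γ → γ ∈ Γ)
    (η : GL (Fin 2) F) (r : ℕ) (γs : Fin r → GL (Fin 2) F)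
    (hcov : (⋃ j, (fun g => g * γs j) '' (Γ : Set (GL (Fin 2) F))) =
      {x | ∃ a ∈ Γ, ∃ b ∈ Γ, x = a * η * b})
    (hdisj : ∀ j j' : Fin r, j ≠ j' →
      Disjoint ((fun g => g * γs j) '' (Γ : Set (GL (Fin 2) F)))
        ((fun g => g * γs j') '' (Γ : Set (GL (Fin 2) F))))
    (k m : ℤ) (ℓ : ℕ) (f : L → L) (fam : ℕ → L → L)
    (hQM : IsQM F (Γ : Set (GL (Fin 2) F)) k m ℓ f fam)
    (lam : L)
    (Tf : L → L)
    (hTf : ∀ z, Tf z = detL F η ^ (k - m) * ∑ j, dslash F k m ℓ fam (γs j) z)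
    (Ti : ℕ → L → L)
    (hTi : ∀ i z, Ti i z = detL F η ^ ((k - 2 * (i : ℤ)) - (m - (i : ℤ))) *
      ∑ j, dslash F (k - 2 * (i : ℤ)) (m - (i : ℤ)) (ℓ - i) (shiftFam i fam) (γs j) z) :
    (∀ z ∈ Omega F, Tf z = lam * f z) ↔
      ∀ i ≤ ℓ, ∀ z ∈ Omega F,
        Ti i z = lam * detL F η ^ (-(i : ℤ)) * fam i z := by
  have hU := infinite_setOf_lowerUnipotent_mem F hι h𝔫 hΓ𝔫
  have hP := hQM.isPSlashInvariant_assocPoly hU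
  have hTP := isPSlashInvariant_pHecke hcov hdisj hP
  have hcoeff : ∀ i ≤ ℓ, ∀ z ∈ Omega F,
      (pHecke F k m η γs (assocPoly ℓ fam) z).coeff i = detL F η ^ (i : ℤ) * Ti i z :=
    fun i hi z hz => by rw [hTi, coeff_pHecke_assocPoly η γs ℓ fam hz hi]
  have hTi0 : ∀ z, Ti 0 z = Tf z := fun z => by simp [hTi, hTf, shiftFam_zero]
  constructor
  · intro h i hi z hz
    have hconst : ∀ w ∈ Omega F, (pHecke F k m η γs (assocPoly ℓ fam) w).coeff 0 =
        (C lam * assocPoly ℓ fam w).coeff 0 := fun w hw => by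
      rw [hcoeff 0 ℓ.zero_le w hw, coeff_C_mul, coeff_assocPoly w ℓ.zero_le, hTi0, h w hw,
        hQM.1 hw, Nat.cast_zero, zpow_zero, one_mul]
    have hi' := congrArg (coeff · i) (hTP.eq_of_coeff_zero_eq hU (hP.C_mul lam) hconst hz)
    simp only [hcoeff i hi z hz, coeff_C_mul, coeff_assocPoly z hi] at hi'
    rw [zpow_neg, mul_right_comm, ← hi', mul_comm (detL F η ^ (i : ℤ)),
      mul_inv_cancel_right₀ (zpow_ne_zero _ (detL_ne_zero F η))]
  · intro h z hz
    simpa [hTi0, hQM.1 hz] using h 0 ℓ.zero_le z hz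

/-- Characterization of Hecke eigenforms (Corollary 5.5): `T_η(f) = λf` iff
`T_η(fᵢ) = λ(det η)^{-i} fᵢ` for all `0 ≤ i ≤ ℓ`. -/
theorem hecke_eigenform_iff
    {L : Type*} [Field L] {Fq : Type*} [Field Fq] [Fintype Fq]
    (F : Subfield L) (ι : Polynomial Fq →+* F) (hι : Function.Injective ι)
    (Γ : Subgroup (GL (Fin 2) F))
    (hΓA : ∀ γ ∈ Γ, InGamma0 F ι ⊤ γ)
    (𝔫 : Ideal (Polynomial Fq)) (h𝔫 : 𝔫 ≠ ⊥)
    (hΓ𝔫 : ∀ γ : GL (Fin 2) F, InGammaN F ι 𝔫 γ → γ ∈ Γ)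
    (η : GL (Fin 2) F) (r : ℕ) (γs : Fin r → GL (Fin 2) F)
    (hcov : (⋃ j, (fun g => g * γs j) '' (Γ : Set (GL (Fin 2) F))) =
      {x | ∃ a ∈ Γ, ∃ b ∈ Γ, x = a * η * b})
    (hdisj : ∀ j j' : Fin r, j ≠ j' →
      Disjoint ((fun g => g * γs j) '' (Γ : Set (GL (Fin 2) F)))
        ((fun g => g * γs j') '' (Γ : Set (GL (Fin 2) F))))
    (k m : ℤ) (ℓ : ℕ) (f : L → L) (fam : ℕ → L → L)
    (hQM : IsQM F (Γ : Set (GL (Fin 2) F)) k m ℓ f fam)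
    (lam : L)
    (Tf : L → L)
    (hTf : ∀ z, Tf z = detL F η ^ (k - m) * ∑ j, dslash F k m ℓ fam (γs j) z)
    (Ti : ℕ → L → L)
    (hTi : ∀ i z, Ti i z = detL F η ^ ((k - 2 * (i : ℤ)) - (m - (i : ℤ))) *
      ∑ j, dslash F (k - 2 * (i : ℤ)) (m - (i : ℤ)) (ℓ - i) (shiftFam i fam) (γs j) z) :
    (∀ z ∈ Omega F, Tf z = lam * f z) ↔
      ∀ i ≤ ℓ, ∀ z ∈ Omega F,
        Ti i z = lam * detL F η ^ (-(i : ℤ)) * fam i z :=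
  hecke_eigenform_iff_general F ι hι Γ 𝔫 h𝔫 hΓ𝔫 η r γs hcov hdisj k m ℓ f fam hQM lam Tf hTf Ti hTi

end DrinfeldQM
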